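/- The operators Q(s_a) := s_a - k_a I(a) on real-analytic functions on V̂⁺, where s_a acts by (s_a f)(v̂) = f(s_a v̂) and I(a) is the integral-reflection operator, satisfy Q(s_a)² = Id for each affine root a. -/

import Mathlib

open scoped RealInnerProductSpace

/- V̂ = V ⊕ ℝc ⊕ ℝd modeled as `V × ℝ × ℝ`. -/

/-- The bilinear form on V̂ extending the inner product by (c,d)=1, (c,c)=(d,d)=0. -/
noncomputable def BhatV {V : Type*} [NormedAddCommGroup V] [InnerProductSpace ℝ V]
    (p q : V × ℝ × ℝ) : ℝ :=
  ⟪p.1, q.1⟫ + p.2.1 * q.2.2 + p.2.2 * q.2.1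

/-- Reflection s_a(v̂) = v̂ - (v̂, a∨)a, a∨ = (2/(a,a))a. -/
noncomputable def srefV {V : Type*} [NormedAddCommGroup V] [InnerProductSpace ℝ V]
    (a : V × ℝ × ℝ) (p : V × ℝ × ℝ) : V × ℝ × ℝ :=
  p - ((2 / BhatV a a) * BhatV p a) • a

/-- The operator Q(s_a) = s_a - k_a I(a):
(Q(s_a)f)(v̂) = f(s_a v̂) - k_a ∫₀^{(a,v̂)} f(v̂ - t a∨) dt. -/
noncomputable def Qop {V : Type*} [NormedAddCommGroup V] [InnerProductSpace ℝ V]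
    (a : V × ℝ × ℝ) (k : ℂ) (f : V × ℝ × ℝ → ℂ) (v : V × ℝ × ℝ) : ℂ :=
  f (srefV a v) - k * ∫ t in (0:ℝ)..(BhatV a v), f (v - t • ((2 / BhatV a a) • a))

/-! Along the line `t ↦ v - t • a∨` the pairing with `a` drops by `2t`, so `s_a` acts on it as
`t ↦ (a, v) - t` and `Q(s_a)` becomes the one-variable operator
`g ↦ g (c - ·) - k ∫_·^{c-·} g` with `c = (a, v)`. Squaring it, the two first-order terms in `k`
cancel after the substitution `u ↦ c - u`, and the `k²` term is the integral over `[t, c - t]` of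
`u ↦ ∫_u^{c-u} g`, which is odd about `c / 2` and so integrates to zero. -/

open intervalIntegral

noncomputable section

/-- The one-variable model of `Q(s_a)` on the line through `v` in direction `a∨`, with
`c = (a, v)`. -/
def reflIntegralOp (k : ℂ) (c : ℝ) (g : ℝ → ℂ) (t : ℝ) : ℂ :=
  g (c - t) - k * ∫ u in t..c - t, g u

section Reflection

variable {E : Type*} [NormedAddCommGroup E] [NormedSpace ℝ E]

theorem integral_comp_reflect (g : ℝ → E) (c t : ℝ) :
    ∫ u in t..c - t, g (c - u) = ∫ u in t..c - t, g u := by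
  rw [integral_comp_sub_left, sub_sub_cancel]

theorem integral_eq_zero_of_reflect_eq_neg {H : ℝ → E} {c : ℝ} (hH : ∀ u, H (c - u) = -H u)
    (t : ℝ) : ∫ u in t..c - t, H u = 0 := by
  have h := integral_comp_reflect H c t
  simp only [hH, integral_neg, neg_eq_iff_add_eq_zero] at h
  rwa [← two_smul ℝ, smul_eq_zero_iff_right two_ne_zero] at h

theorem continuous_integral_reflect {g : ℝ → E} (hg : Continuous g) (c : ℝ) :
    Continuous fun u => ∫ s in u..c - u, g s := by
  have hint : ∀ x y : ℝ, IntervalIntegrable g MeasureTheory.volume x y :=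
    hg.intervalIntegrable
  have hF : Continuous fun x => ∫ s in (0 : ℝ)..x, g s := continuous_primitive hint 0
  have hdiff : Continuous fun u => (∫ s in (0 : ℝ)..c - u, g s) - ∫ s in (0 : ℝ)..u, g s :=
    (hF.comp (continuous_const.sub continuous_id)).sub hF
  exact hdiff.congr fun u => integral_interval_sub_left (hint 0 (c - u)) (hint 0 u)

end Reflection

theorem reflIntegralOp_reflIntegralOp {g : ℝ → ℂ} (hg : Continuous g) (k : ℂ) (c t : ℝ) :
    reflIntegralOp k c (reflIntegralOp k c g) t = g t := by
  set H : ℝ → ℂ := fun u => ∫ s in u..c - u, g s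
  have hH_odd : ∀ u, H (c - u) = -H u := fun u => by
    simp only [H, sub_sub_cancel]
    exact integral_symm _ _
  have hRg : ∀ u, reflIntegralOp k c g u = g (c - u) - k * H u := fun _ => rfl
  have h_outer : reflIntegralOp k c g (c - t) = g t + k * H t := by
    rw [hRg, sub_sub_cancel, hH_odd]
    ring
  have hg_refl : Continuous fun u => g (c - u) := by fun_prop
  have h_inner : ∫ u in t..c - t, reflIntegralOp k c g u = H t := by
    simp only [hRg]
    rw [integral_sub (hg_refl.intervalIntegrable _ _)
      (((continuous_integral_reflect hg c).intervalIntegrable _ _).const_mul k),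
      integral_const_mul, integral_comp_reflect, integral_eq_zero_of_reflect_eq_neg hH_odd,
      mul_zero, sub_zero]
  rw [reflIntegralOp, h_outer, h_inner]
  ring

section AffineReflection

variable {V : Type*} [NormedAddCommGroup V] [InnerProductSpace ℝ V]

def corootV (a : V × ℝ × ℝ) : V × ℝ × ℝ := (2 / BhatV a a) • a

theorem BhatV_comm (p q : V × ℝ × ℝ) : BhatV p q = BhatV q p := by
  simp only [BhatV, real_inner_comm]
  ring

theorem BhatV_sub_right (p q r : V × ℝ × ℝ) : BhatV p (q - r) = BhatV p q - BhatV p r := by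
  simp only [BhatV, Prod.fst_sub, Prod.snd_sub, inner_sub_right]
  ring

theorem BhatV_smul_right (t : ℝ) (p q : V × ℝ × ℝ) : BhatV p (t • q) = t * BhatV p q := by
  simp only [BhatV, Prod.smul_fst, Prod.smul_snd, smul_eq_mul, real_inner_smul_right]
  ring

theorem BhatV_corootV {a : V × ℝ × ℝ} (ha : BhatV a a ≠ 0) : BhatV a (corootV a) = 2 := by
  rw [corootV, BhatV_smul_right, div_mul_cancel₀ _ ha]

theorem srefV_eq (a p : V × ℝ × ℝ) : srefV a p = p - BhatV a p • corootV a := by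
  rw [srefV, corootV, smul_smul, BhatV_comm p a, mul_comm]

theorem BhatV_sub_smul_corootV {a : V × ℝ × ℝ} (ha : BhatV a a ≠ 0) (v : V × ℝ × ℝ) (t : ℝ) :
    BhatV a (v - t • corootV a) = BhatV a v - 2 * t := by
  rw [BhatV_sub_right, BhatV_smul_right, BhatV_corootV ha, mul_comm]

theorem srefV_sub_smul_corootV {a : V × ℝ × ℝ} (ha : BhatV a a ≠ 0) (v : V × ℝ × ℝ) (t : ℝ) :
    srefV a (v - t • corootV a) = v - (BhatV a v - t) • corootV a := by
  rw [srefV_eq, BhatV_sub_smul_corootV ha]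
  module

theorem Qop_sub_smul_corootV {a : V × ℝ × ℝ} (ha : BhatV a a ≠ 0) (k : ℂ)
    (f : V × ℝ × ℝ → ℂ) (v : V × ℝ × ℝ) (t : ℝ) :
    Qop a k f (v - t • corootV a) =
      reflIntegralOp k (BhatV a v) (fun s => f (v - s • corootV a)) t := by
  have h_shift : ∀ u : ℝ, v - t • corootV a - u • (2 / BhatV a a) • a = v - (t + u) • corootV a :=
    fun u => by rw [corootV, add_smul, sub_sub]
  rw [Qop, srefV_sub_smul_corootV ha, BhatV_sub_smul_corootV ha, reflIntegralOp]
  simp only [h_shift]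
  rw [integral_comp_add_left (fun s => f (v - s • corootV a)), add_zero,
    show t + (BhatV a v - 2 * t) = BhatV a v - t by ring]

end AffineReflection

end

/-- Q(s_a)² = Id, for every affine root a with (a,a) ≠ 0 and k_a ∈ ℂ. -/
theorem stmt13 {V : Type*} [NormedAddCommGroup V] [InnerProductSpace ℝ V]
    (a : V × ℝ × ℝ) (ha : BhatV a a ≠ 0) (k : ℂ)
    (f : V × ℝ × ℝ → ℂ) (hf : Continuous f) :
    ∀ v : V × ℝ × ℝ, Qop a k (Qop a k f) v = f v := by
  intro v
  have hline : Continuous fun s : ℝ => f (v - s • corootV a) := by fun_prop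
  simpa only [Qop_sub_smul_corootV ha, reflIntegralOp_reflIntegralOp hline, zero_smul,
    sub_zero] using Qop_sub_smul_corootV ha k (Qop a k f) v 0
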